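/- arXiv:2604.05944 — 5 statements merged into one kernel-verified Lean document; each statement's English description precedes it below -/
import Mathlib

section
/- Let n > 2 and let B be an n×2 real matrix with BᵀB = I₂ whose first row equals (b, 0) with 0 < b² ≤ 1/n. Set t = 1/√(1 − b²) and let Ĉ be the (n−1)×2 matrix whose rows are (t·B_{i1}, B_{i2}) for i = 2,…,n. Then ĈᵀĈ = I₂, and for any two distinct indices i, j ∈ {2,…,n}, if the 2×2 submatrix of Ĉ with rows (t·B_{i1}, B_{i2}) and (t·B_{j1}, B_{j2}) has squared smallest singular value at least 1/(n−1), then the 2×2 submatrix of B with rows (B_{i1}, B_{i2}) and (B_{j1}, B_{j2}) has squared smallest singular value at least 1/n. -/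
/-!
The first claim follows from `∑_{i ≥ 2} B_{ik} B_{il} = δ_{kl} - B_{1k} B_{1l}` and
`t² (1 - b²) = 1`. For the second, `c ≤ σ₂(Q)²` says that `QᵀQ - c I`, the shifted Gram matrix of
the columns of `Q`, is positive semidefinite. Dividing the first column of `Q` by `t ≥ 1` keeps
this true with `c` replaced by `c / t²`, and `(1 - b²) / (n - 1) ≥ 1 / n` because `b² ≤ 1 / n`.
-/

open Matrix

/-- The smallest singular value of a `2 × 2` real matrix `Q`: the square root of the
smallest eigenvalue of `Q * Qᵀ` (for a `2 × 2` real positive semidefinite matrix `S`, the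
smallest eigenvalue equals `(trace S - √((trace S)² - 4 det S)) / 2`). -/
noncomputable def sigma2 (Q : Matrix (Fin 2) (Fin 2) ℝ) : ℝ :=
  Real.sqrt ((Matrix.trace (Q * Qᵀ) -
    Real.sqrt ((Matrix.trace (Q * Qᵀ)) ^ 2 - 4 * (Q * Qᵀ).det)) / 2)

/-- The smaller eigenvalue of `!![a, e; e, g]` is at least `c` iff `!![a - c, e; e, g - c]` is
positive semidefinite. -/
lemma le_half_sub_sqrt_discrim_iff (a g e c : ℝ) :
    c ≤ (a + g - √((a + g) ^ 2 - 4 * (a * g - e ^ 2))) / 2 ↔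
      c ≤ a ∧ c ≤ g ∧ e ^ 2 ≤ (a - c) * (g - c) := by
  have hdisc : (a + g) ^ 2 - 4 * (a * g - e ^ 2) = (a - g) ^ 2 + 4 * e ^ 2 := by ring
  rw [hdisc, le_div_iff₀ two_pos, ← le_sub_comm, Real.sqrt_le_iff]
  constructor
  · rintro ⟨h, hsq⟩
    refine ⟨?_, ?_, by nlinarith⟩ <;> nlinarith [sq_nonneg e, sq_nonneg (a - g)]
  · rintro ⟨ha, hg, he⟩
    exact ⟨by linarith, by nlinarith⟩

lemma sq_sigma2_of (p q r s : ℝ) :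
    sigma2 !![p, q; r, s] ^ 2 =
      (p ^ 2 + r ^ 2 + (q ^ 2 + s ^ 2) - √((p ^ 2 + r ^ 2 + (q ^ 2 + s ^ 2)) ^ 2 -
        4 * ((p ^ 2 + r ^ 2) * (q ^ 2 + s ^ 2) - (p * q + r * s) ^ 2))) / 2 := by
  have htr : trace (!![p, q; r, s] * !![p, q; r, s]ᵀ) = p ^ 2 + r ^ 2 + (q ^ 2 + s ^ 2) := by
    simp only [trace_fin_two, mul_apply, transpose_apply, Fin.sum_univ_two, of_apply, cons_val_zero,
      cons_val_one, cons_val_fin_one]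
    ring
  have hdet : (!![p, q; r, s] * !![p, q; r, s]ᵀ).det =
      (p ^ 2 + r ^ 2) * (q ^ 2 + s ^ 2) - (p * q + r * s) ^ 2 := by
    rw [det_mul, det_transpose, det_fin_two_of]; ring
  rw [sigma2, htr, hdet, Real.sq_sqrt]
  exact (le_half_sub_sqrt_discrim_iff _ _ _ 0).2
    ⟨by positivity, by positivity, by nlinarith [sq_nonneg (p * s - q * r)]⟩

lemma le_sigma2_sq_iff (p q r s c : ℝ) :
    c ≤ sigma2 !![p, q; r, s] ^ 2 ↔
      c ≤ p ^ 2 + r ^ 2 ∧ c ≤ q ^ 2 + s ^ 2 ∧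
        (p * q + r * s) ^ 2 ≤ (p ^ 2 + r ^ 2 - c) * (q ^ 2 + s ^ 2 - c) := by
  rw [sq_sigma2_of]
  exact le_half_sub_sqrt_discrim_iff _ _ _ c

lemma le_sigma2_sq_of_le_sigma2_sq_mul_col {p q r s t c : ℝ} (ht : 1 ≤ t ^ 2)
    (h : t ^ 2 * c ≤ sigma2 !![t * p, q; t * r, s] ^ 2) : c ≤ sigma2 !![p, q; r, s] ^ 2 := by
  rcases le_or_gt c 0 with hc | hc
  · exact hc.trans (sq_nonneg _)
  have ht0 : 0 < t ^ 2 := one_pos.trans_le ht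
  have hct : c ≤ t ^ 2 * c := le_mul_of_one_le_left hc.le ht
  rw [le_sigma2_sq_iff] at h ⊢
  obtain ⟨ha, hg, he⟩ := h
  have ha' : c ≤ p ^ 2 + r ^ 2 := le_of_mul_le_mul_left (by linear_combination ha) ht0
  refine ⟨ha', hct.trans hg, le_of_mul_le_mul_left ?_ ht0⟩
  calc t ^ 2 * (p * q + r * s) ^ 2
      ≤ t ^ 2 * (p ^ 2 + r ^ 2 - c) * (q ^ 2 + s ^ 2 - t ^ 2 * c) := by linear_combination he
    _ ≤ t ^ 2 * ((p ^ 2 + r ^ 2 - c) * (q ^ 2 + s ^ 2 - c)) := by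
      rw [mul_assoc]; gcongr

lemma sum_subtype_mul_eq_transpose_mul_sub {m k R : Type*} [Fintype m] [DecidableEq m]
    [CommRing R] (B : Matrix m k R) {p : m → Prop} [DecidablePred p] {i₀ : m}
    (hp : ∀ i, p i ↔ i ≠ i₀) (a b : k) :
    ∑ i : {i // p i}, B i a * B i b = (Bᵀ * B) a b - B i₀ a * B i₀ b := by
  rw [mul_apply, Fintype.sum_eq_add_sum_subtype_ne _ i₀]
  simp only [transpose_apply, add_sub_cancel_left]
  exact Fintype.sum_equiv (Equiv.subtypeEquivRight hp) _ _ fun _ => rfl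

lemma transpose_mul_self_eq_one_of_rescale_erase_row {m : Type*} [Fintype m] [DecidableEq m]
    {B : Matrix m (Fin 2) ℝ} (hB : Bᵀ * B = 1) {i₀ : m} {b t : ℝ} (hrow0 : B i₀ 0 = b)
    (hrow1 : B i₀ 1 = 0) (ht : t ^ 2 * (1 - b ^ 2) = 1) {p : m → Prop} [DecidablePred p]
    (hp : ∀ i, p i ↔ i ≠ i₀) (C : Matrix {i // p i} (Fin 2) ℝ)
    (hC : ∀ i, C i 0 = t * B i 0 ∧ C i 1 = B i 1) : Cᵀ * C = 1 := by
  have hC' : ∀ i k, C i k = ![t, 1] k * B i k := by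
    intro i k; fin_cases k <;> simp [(hC i).1, (hC i).2]
  ext k l
  have hsum := sum_subtype_mul_eq_transpose_mul_sub B hp k l
  simp only [mul_apply, transpose_apply, hC', mul_mul_mul_comm _ (B _ k)]
  rw [← Finset.mul_sum, hsum, hB]
  fin_cases k <;> fin_cases l <;> simp [hrow0, hrow1]
  linear_combination ht

theorem stmt_2 (n : ℕ) (hn : 2 < n) (b : ℝ) (B : Matrix (Fin n) (Fin 2) ℝ)
    (hB : Bᵀ * B = 1)
    (hrow0 : B ⟨0, by omega⟩ 0 = b) (hrow1 : B ⟨0, by omega⟩ 1 = 0)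
    (hb' : b ^ 2 ≤ 1 / (n : ℝ))
    (t : ℝ) (ht : t = 1 / Real.sqrt (1 - b ^ 2))
    (Chat : Matrix {i : Fin n // i.1 ≠ 0} (Fin 2) ℝ)
    (hChat : ∀ i : {i : Fin n // i.1 ≠ 0},
      Chat i 0 = t * B i.1 0 ∧ Chat i 1 = B i.1 1) :
    Chatᵀ * Chat = 1 ∧
    ∀ i j : Fin n, i.1 ≠ 0 → j.1 ≠ 0 → i ≠ j →
      1 / ((n : ℝ) - 1) ≤ (sigma2 !![t * B i 0, B i 1; t * B j 0, B j 1]) ^ 2 →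
      1 / (n : ℝ) ≤ (sigma2 !![B i 0, B i 1; B j 0, B j 1]) ^ 2 := by
  have hn1 : (1 : ℝ) < n := by exact_mod_cast hn.trans' one_lt_two
  have hb1 : 0 < 1 - b ^ 2 := by
    linarith [hb'.trans_lt ((div_lt_one (by linarith)).2 hn1)]
  have ht2 : t ^ 2 * (1 - b ^ 2) = 1 := by
    rw [ht, div_pow, Real.sq_sqrt hb1.le]; field_simp
  refine ⟨transpose_mul_self_eq_one_of_rescale_erase_row hB hrow0 hrow1 ht2
    (fun _ => Fin.ext_iff.not.symm) Chat hChat, fun i j _ _ _ h => ?_⟩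
  refine le_sigma2_sq_of_le_sigma2_sq_mul_col (by nlinarith) (h.trans' ?_)
  have hnb : 0 ≤ 1 - n * b ^ 2 := by
    rw [le_div_iff₀ (by linarith)] at hb'; linarith
  rw [mul_one_div, div_le_div_iff₀ (by linarith) (by linarith)]
  nlinarith [mul_nonneg (sq_nonneg t) hnb]
end

section
/- Let n > 2 and let A be an n×2 real matrix with orthonormal columns (AᵀA = I₂), with rows r₁,…,rₙ ∈ ℝ². If every row satisfies ‖rᵢ‖² > 1/n, then there exist two distinct indices i, j such that ⟨rᵢ, rⱼ⟩² ≤ (‖rᵢ‖² − 1/n)(‖rⱼ‖² − 1/n). -/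
open Matrix
open scoped RealInnerProductSpace

open Finset

/-!
Write the columns of `A` as `u, v` and let `N = 1 / n`. The minors `m i j = u i v j - u j v i`
satisfy `m i j ^ 2 = ‖rᵢ‖² ‖rⱼ‖² - ⟨rᵢ, rⱼ⟩²` and `∑ⱼ m i j ^ 2 = ‖rᵢ‖²`. Weighting the
defects `(‖rᵢ‖² - N)(‖rⱼ‖² - N) - ⟨rᵢ, rⱼ⟩²` by `m i j ^ 2` and summing gives a quartic
expression in the columns. Rotating `(u, v)` changes no `rᵢ · rⱼ`, and for a rotation with
`∑ uᵢ vᵢ ‖rᵢ‖² = 0` the Cauchy–Schwarz inequality for `u² - N` and `v² - N` shows that this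
expression is nonnegative. If all defects with `i ≠ j` were negative, the weighted sum would be
negative, since some row of minors is not identically zero.
-/

section

variable {ι : Type*} [Fintype ι]

structure OrthonormalPair (u v : ι → ℝ) : Prop where
  sum_sq_left : ∑ i, u i ^ 2 = 1
  sum_sq_right : ∑ i, v i ^ 2 = 1
  sum_mul : ∑ i, u i * v i = 0

def rowGram (u v : ι → ℝ) (i j : ι) : ℝ := u i * u j + v i * v j

theorem exists_cos_sin_balancing (a b : ℝ) :
    ∃ c s : ℝ, c ^ 2 + s ^ 2 = 1 ∧ c * s * a + (c ^ 2 - s ^ 2) * b = 0 := by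
  set w : ℂ := ⟨a, -2 * b⟩
  set θ := w.arg / 2
  refine ⟨Real.cos θ, Real.sin θ, Real.cos_sq_add_sin_sq θ, ?_⟩
  rcases eq_or_ne w 0 with hw | hw
  · simp only [w, Complex.ext_iff, Complex.zero_re, Complex.zero_im] at hw
    obtain ⟨rfl, hb⟩ := hw
    obtain rfl : b = 0 := by linarith
    ring
  -- `‖w‖ (cos 2θ, sin 2θ) = w = (a, -2b)` is orthogonal to `(b, a / 2)`.
  have hcos := Complex.norm_mul_cos_arg w
  have hsin := Complex.norm_mul_sin_arg w
  rw [show w.arg = 2 * θ by ring] at hcos hsin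
  rw [Real.cos_two_mul] at hcos
  rw [Real.sin_two_mul] at hsin
  refine (mul_eq_zero.mp ?_).resolve_left (norm_ne_zero_iff.mpr hw)
  linear_combination (a / 2) * hsin + b * hcos - b * ‖w‖ * Real.cos_sq_add_sin_sq θ

theorem sum_sub_inv_card_mul_sub [Nonempty ι] {f g : ι → ℝ} (hf : ∑ i, f i = 1)
    (hg : ∑ i, g i = 1) :
    ∑ i, (f i - 1 / Fintype.card ι) * (g i - 1 / Fintype.card ι)
      = ∑ i, f i * g i - 1 / Fintype.card ι := by
  have hcard : (Fintype.card ι : ℝ) ≠ 0 := by positivity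
  simp only [sub_mul, mul_sub, sum_sub_distrib, ← Finset.sum_mul, ← Finset.mul_sum, hf, hg,
    sum_const, card_univ, nsmul_eq_mul]
  field_simp
  ring

theorem sum_sum_minor_pow_four (u v : ι → ℝ) :
    ∑ i, ∑ j, (u i * v j - u j * v i) ^ 4 =
      2 * (∑ i, u i ^ 4) * (∑ i, v i ^ 4) + 6 * (∑ i, u i ^ 2 * v i ^ 2) ^ 2
        - 8 * (∑ i, u i ^ 3 * v i) * (∑ i, u i * v i ^ 3) := by
  have expand : ∀ i j, (u i * v j - u j * v i) ^ 4 = u i ^ 4 * v j ^ 4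
      - 4 * (u i ^ 3 * v i) * (u j * v j ^ 3) + 6 * (u i ^ 2 * v i ^ 2) * (u j ^ 2 * v j ^ 2)
      - 4 * (u i * v i ^ 3) * (u j ^ 3 * v j) + v i ^ 4 * u j ^ 4 := fun i j => by ring
  simp only [expand, sum_add_distrib, sum_sub_distrib, ← Finset.mul_sum, ← Finset.sum_mul]
  ring

namespace OrthonormalPair

variable {u v : ι → ℝ}

theorem nonempty (h : OrthonormalPair u v) : Nonempty ι := by
  by_contra hempty
  have := h.sum_sq_left
  simp [not_nonempty_iff.mp hempty] at this

theorem sum_rowGram_self (h : OrthonormalPair u v) : ∑ i, rowGram u v i i = 2 := by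
  simp only [rowGram, ← sq, sum_add_distrib, h.sum_sq_left, h.sum_sq_right]
  norm_num

theorem sum_minor_sq (h : OrthonormalPair u v) (i : ι) :
    ∑ j, (u i * v j - u j * v i) ^ 2 = rowGram u v i i := by
  have expand : ∀ j, (u i * v j - u j * v i) ^ 2
      = u i ^ 2 * v j ^ 2 - 2 * (u i * v i) * (u j * v j) + v i ^ 2 * u j ^ 2 := fun j => by ring
  simp only [expand, sum_add_distrib, sum_sub_distrib, ← Finset.mul_sum, h.sum_sq_left,
    h.sum_sq_right, h.sum_mul, rowGram]
  ring

theorem exists_balanced_rotation (h : OrthonormalPair u v) :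
    ∃ x y : ι → ℝ, OrthonormalPair x y ∧ ∑ i, x i * y i * rowGram x y i i = 0 ∧
      rowGram x y = rowGram u v := by
  obtain ⟨c, s, hcs, hbal⟩ := exists_cos_sin_balancing
    (∑ i, (v i ^ 2 - u i ^ 2) * rowGram u v i i) (∑ i, u i * v i * rowGram u v i i)
  refine ⟨fun i => c * u i + s * v i, fun i => -s * u i + c * v i, ⟨?_, ?_, ?_⟩, ?_, ?_⟩
  · have expand : ∀ i, (c * u i + s * v i) ^ 2
        = c ^ 2 * u i ^ 2 + 2 * c * s * (u i * v i) + s ^ 2 * v i ^ 2 := fun i => by ring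
    simp only [expand, sum_add_distrib, ← Finset.mul_sum, h.sum_sq_left, h.sum_sq_right,
      h.sum_mul]
    linear_combination hcs
  · have expand : ∀ i, (-s * u i + c * v i) ^ 2
        = s ^ 2 * u i ^ 2 - 2 * c * s * (u i * v i) + c ^ 2 * v i ^ 2 := fun i => by ring
    simp only [expand, sum_add_distrib, sum_sub_distrib, ← Finset.mul_sum, h.sum_sq_left,
      h.sum_sq_right, h.sum_mul]
    linear_combination hcs
  · have expand : ∀ i, (c * u i + s * v i) * (-s * u i + c * v i)
        = c * s * (v i ^ 2 - u i ^ 2) + (c ^ 2 - s ^ 2) * (u i * v i) := fun i => by ring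
    simp only [expand, sum_add_distrib, sum_sub_distrib, ← Finset.mul_sum, h.sum_sq_left,
      h.sum_sq_right, h.sum_mul]
    ring
  · have expand : ∀ i, (c * u i + s * v i) * (-s * u i + c * v i)
        * rowGram (fun i => c * u i + s * v i) (fun i => -s * u i + c * v i) i i
        = (c ^ 2 + s ^ 2) * (c * s * ((v i ^ 2 - u i ^ 2) * rowGram u v i i)
          + (c ^ 2 - s ^ 2) * (u i * v i * rowGram u v i i)) := fun i => by
      simp only [rowGram]; ring
    simp only [expand, ← Finset.mul_sum, sum_add_distrib]
    rw [hbal, mul_zero]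
  · ext i j
    simp only [rowGram]
    linear_combination (u i * u j + v i * v j) * hcs

theorem sum_sum_minor_sq_mul_gap (h : OrthonormalPair u v) (N : ℝ) :
    ∑ i, ∑ j, (u i * v j - u j * v i) ^ 2
        * ((rowGram u v i i - N) * (rowGram u v j j - N) - rowGram u v i j ^ 2)
      = ∑ i, ∑ j, (u i * v j - u j * v i) ^ 4 - 2 * N * ∑ i, rowGram u v i i ^ 2
        + 2 * N ^ 2 := by
  -- `(u i v j - u j v i)² = ‖rᵢ‖² ‖rⱼ‖² - ⟨rᵢ, rⱼ⟩²` (Lagrange's identity).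
  have expand : ∀ i j, (u i * v j - u j * v i) ^ 2
      * ((rowGram u v i i - N) * (rowGram u v j j - N) - rowGram u v i j ^ 2)
      = (u i * v j - u j * v i) ^ 4 - N * ((u i * v j - u j * v i) ^ 2 * rowGram u v i i)
        - N * ((u j * v i - u i * v j) ^ 2 * rowGram u v j j)
        + N ^ 2 * (u i * v j - u j * v i) ^ 2 := fun i j => by
    simp only [rowGram]; ring
  have hrow : ∀ i, ∑ j, (u i * v j - u j * v i) ^ 2 * rowGram u v i i = rowGram u v i i ^ 2 :=
    fun i => by rw [← Finset.sum_mul, h.sum_minor_sq, sq]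
  have hcol : ∑ i, ∑ j, (u j * v i - u i * v j) ^ 2 * rowGram u v j j
      = ∑ i, rowGram u v i i ^ 2 := by
    rw [sum_comm]
    exact sum_congr rfl fun j _ => hrow j
  simp only [expand, sum_add_distrib, sum_sub_distrib, ← Finset.mul_sum, hrow, hcol,
    h.sum_minor_sq, h.sum_rowGram_self]
  ring

theorem le_sum_sum_minor_pow_four (h : OrthonormalPair u v)
    (hbal : ∑ i, u i * v i * rowGram u v i i = 0) :
    2 * (1 / Fintype.card ι) * ∑ i, rowGram u v i i ^ 2 - 2 * (1 / Fintype.card ι : ℝ) ^ 2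
      ≤ ∑ i, ∑ j, (u i * v j - u j * v i) ^ 4 := by
  have := h.nonempty
  set N : ℝ := 1 / Fintype.card ι
  rw [sum_sum_minor_pow_four]
  set A := ∑ i, u i ^ 4
  set B := ∑ i, v i ^ 4
  set D := ∑ i, u i ^ 2 * v i ^ 2
  set E := ∑ i, u i ^ 3 * v i
  have hF : ∑ i, u i * v i ^ 3 = -E := by
    rw [eq_neg_iff_add_eq_zero, ← hbal, ← sum_add_distrib]
    exact sum_congr rfl fun i _ => by simp only [rowGram]; ring
  have hm : ∑ i, rowGram u v i i ^ 2 = A + 2 * D + B := by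
    rw [Finset.mul_sum, ← sum_add_distrib, ← sum_add_distrib]
    exact sum_congr rfl fun i _ => by simp only [rowGram]; ring
  have hcs := sum_mul_sq_le_sq_mul_sq univ (fun i => u i ^ 2 - N) (fun i => v i ^ 2 - N)
  have hD := sum_sub_inv_card_mul_sub h.sum_sq_left h.sum_sq_right
  have hA := sum_sub_inv_card_mul_sub h.sum_sq_left h.sum_sq_left
  have hB := sum_sub_inv_card_mul_sub h.sum_sq_right h.sum_sq_right
  simp only [← sq, ← pow_mul] at hD hA hB
  rw [hD, hA, hB] at hcs
  rw [hF, hm]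
  nlinarith [sq_nonneg (2 * D - N), sq_nonneg E]

theorem exists_ne_rowGram_sq_le_of_balanced (h : OrthonormalPair u v)
    (hbal : ∑ i, u i * v i * rowGram u v i i = 0)
    (hgt : ∀ i, 1 / (Fintype.card ι : ℝ) < rowGram u v i i) :
    ∃ i j, i ≠ j ∧ rowGram u v i j ^ 2 ≤
      (rowGram u v i i - 1 / Fintype.card ι) * (rowGram u v j j - 1 / Fintype.card ι) := by
  by_contra! hlt
  set N : ℝ := 1 / Fintype.card ι
  obtain ⟨i₀⟩ := h.nonempty
  have hN : 0 ≤ N := by positivity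
  set term : ι → ι → ℝ := fun i j => (u i * v j - u j * v i) ^ 2
    * ((rowGram u v i i - N) * (rowGram u v j j - N) - rowGram u v i j ^ 2)
  have hterm : ∀ i j, term i j ≤ 0 := by
    intro i j
    rcases eq_or_ne i j with rfl | hij
    · simp [term]
    · exact mul_nonpos_of_nonneg_of_nonpos (sq_nonneg _) (by linarith [hlt i j hij])
  -- Row `i₀` of the minors sums to `‖r i₀‖² > 0`, so some term of that row is negative.
  obtain ⟨j, -, hj⟩ : ∃ j ∈ univ, (u i₀ * v j - u j * v i₀) ^ 2 ≠ 0 :=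
    exists_ne_zero_of_sum_ne_zero (by linarith [h.sum_minor_sq i₀, hgt i₀])
  have hi₀j : i₀ ≠ j := by
    rintro rfl
    simp at hj
  have hneg : term i₀ j < 0 :=
    mul_neg_of_pos_of_neg (lt_of_le_of_ne (sq_nonneg _) hj.symm) (by linarith [hlt i₀ j hi₀j])
  have hsum : ∑ i, ∑ j, term i j < 0 := by
    calc ∑ i, ∑ j, term i j < ∑ _i : ι, ∑ _j : ι, (0 : ℝ) :=
          sum_lt_sum (fun i _ => sum_le_sum fun j _ => hterm i j)
            ⟨i₀, mem_univ _, sum_lt_sum (fun j _ => hterm i₀ j) ⟨j, mem_univ _, hneg⟩⟩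
      _ = 0 := by simp
  linarith [h.sum_sum_minor_sq_mul_gap N, h.le_sum_sum_minor_pow_four hbal]

theorem exists_ne_rowGram_sq_le (h : OrthonormalPair u v)
    (hgt : ∀ i, 1 / (Fintype.card ι : ℝ) < rowGram u v i i) :
    ∃ i j, i ≠ j ∧ rowGram u v i j ^ 2 ≤
      (rowGram u v i i - 1 / Fintype.card ι) * (rowGram u v j j - 1 / Fintype.card ι) := by
  obtain ⟨x, y, hxy, hbal, hgram⟩ := h.exists_balanced_rotation
  rw [← hgram] at hgt ⊢
  exact hxy.exists_ne_rowGram_sq_le_of_balanced hbal hgt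

theorem of_transpose_mul_self {A : Matrix ι (Fin 2) ℝ} (hA : Aᵀ * A = 1) :
    OrthonormalPair (fun i => A i 0) (fun i => A i 1) := by
  have entry : ∀ k l, ∑ i, A i k * A i l = if k = l then 1 else 0 := fun k l => by
    simpa [mul_apply, one_apply] using congrFun₂ hA k l
  refine ⟨?_, ?_, by simpa using entry 0 1⟩
  · simpa [sq] using entry 0 0
  · simpa [sq] using entry 1 1

end OrthonormalPair

end

theorem inner_eq_rowGram {ι : Type*} {A : Matrix ι (Fin 2) ℝ}
    {r : ι → EuclideanSpace ℝ (Fin 2)} (hr : ∀ i j, r i j = A i j) (i j : ι) :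
    ⟪r i, r j⟫ = rowGram (fun i => A i 0) (fun i => A i 1) i j := by
  simp [PiLp.inner_apply, Fin.sum_univ_two, hr, rowGram, mul_comm]

theorem stmt_4_general (n : ℕ) (A : Matrix (Fin n) (Fin 2) ℝ) (hA : Aᵀ * A = 1)
    (r : Fin n → EuclideanSpace ℝ (Fin 2)) (hr : ∀ i j, r i j = A i j)
    (hnorm : ∀ i, 1 / (n : ℝ) < ‖r i‖ ^ 2) :
    ∃ i j, i ≠ j ∧
      ⟪r i, r j⟫ ^ 2 ≤ (‖r i‖ ^ 2 - 1 / (n : ℝ)) * (‖r j‖ ^ 2 - 1 / (n : ℝ)) := by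
  simp only [← real_inner_self_eq_norm_sq, inner_eq_rowGram hr] at hnorm ⊢
  simpa using
    (OrthonormalPair.of_transpose_mul_self hA).exists_ne_rowGram_sq_le (by simpa using hnorm)

theorem stmt_4 (n : ℕ) (hn : 2 < n) (A : Matrix (Fin n) (Fin 2) ℝ) (hA : Aᵀ * A = 1)
    (r : Fin n → EuclideanSpace ℝ (Fin 2)) (hr : ∀ i j, r i j = A i j)
    (hnorm : ∀ i, 1 / (n : ℝ) < ‖r i‖ ^ 2) :
    ∃ i j, i ≠ j ∧
      ⟪r i, r j⟫ ^ 2 ≤ (‖r i‖ ^ 2 - 1 / (n : ℝ)) * (‖r j‖ ^ 2 - 1 / (n : ℝ)) :=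
  stmt_4_general n A hA r hr hnorm
end

section
/- Let n > 2 and let A be an n×2 real matrix with orthonormal columns (AᵀA = I₂), with rows rᵢ = (xᵢ, yᵢ). Let W be the n×2 matrix with rows wᵢ = (xᵢ² − yᵢ², 2xᵢyᵢ), let z ∈ ℝⁿ have entries zᵢ = ‖rᵢ‖² − 2/n, and let G = WWᵀ − zzᵀ. Then Tr(G) = 4/n, and consequently the largest eigenvalue of G is at least 2/n. -/
/-!
Each diagonal entry of `G` is `‖wᵢ‖² - zᵢ² = ‖rᵢ‖⁴ - (‖rᵢ‖² - 2/n)² = (4/n)‖rᵢ‖² - 4/n²`, and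
`∑ ‖rᵢ‖² = Tr (AᵀA) = 2`, whence `Tr G = 4/n`. On the kernel of `Wᵀ`, of codimension at most 2,
the quadratic form of `G` is `-(z ⬝ v)² ≤ 0`, while it is positive definite on the span of the
eigenvectors with positive eigenvalues. These subspaces meet only in `0`, so at most two eigenvalues
are positive; their sum is at least `Tr G = 4/n` and at most twice the largest eigenvalue.
-/

open Matrix Finset

namespace Matrix.IsHermitian

variable {n : Type*} [Fintype n] [DecidableEq n] {G : Matrix n n ℝ}

lemma dotProduct_mulVec_sum_eigenvectorBasis (hG : G.IsHermitian) (s : Finset n) (c : n → ℝ) :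
    (∑ i ∈ s, c i • ⇑(hG.eigenvectorBasis i)) ⬝ᵥ (G *ᵥ ∑ i ∈ s, c i • ⇑(hG.eigenvectorBasis i)) =
      ∑ i ∈ s, hG.eigenvalues i * c i ^ 2 := by
  have hGv : G *ᵥ ∑ i ∈ s, c i • ⇑(hG.eigenvectorBasis i) =
      ∑ i ∈ s, (hG.eigenvalues i * c i) • ⇑(hG.eigenvectorBasis i) := by
    simp only [mulVec_sum, mulVec_smul, hG.mulVec_eigenvectorBasis, smul_smul, mul_comm]
  rw [hGv]
  simp only [← WithLp.ofLp_smul, ← WithLp.ofLp_sum]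
  rw [dotProduct_comm, ← star_trivial (WithLp.ofLp (∑ i ∈ s, c i • hG.eigenvectorBasis i)),
    ← EuclideanSpace.inner_eq_star_dotProduct, hG.eigenvectorBasis.orthonormal.inner_sum]
  simp only [conj_trivial]
  exact sum_congr rfl fun i _ => by ring

theorem card_pos_eigenvalues_le {m : Type*} [Fintype m] (hG : G.IsHermitian) (M : Matrix m n ℝ)
    (hM : ∀ v, M *ᵥ v = 0 → v ⬝ᵥ (G *ᵥ v) ≤ 0) :
    #{i | 0 < hG.eigenvalues i} ≤ Fintype.card m := by
  set S : Finset n := {i | 0 < hG.eigenvalues i}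
  by_contra! hlt
  have hdep : ¬ LinearIndepOn ℝ (fun i => M *ᵥ ⇑(hG.eigenvectorBasis i)) (S : Set n) :=
    fun hind => hlt.not_ge (by simpa using hind.fintype_card_le_finrank)
  obtain ⟨c, hc, i, hiS, hci⟩ : ∃ c : n → ℝ, ∑ i ∈ S, c i • M *ᵥ ⇑(hG.eigenvectorBasis i) = 0 ∧
      ∃ i ∈ S, c i ≠ 0 := by
    simpa [linearIndepOn_finset_iff] using hdep
  have hMv : M *ᵥ ∑ i ∈ S, c i • ⇑(hG.eigenvectorBasis i) = 0 := by
    simpa only [mulVec_sum, mulVec_smul] using hc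
  have hpos : 0 < ∑ i ∈ S, hG.eigenvalues i * c i ^ 2 :=
    sum_pos' (fun j hj => mul_nonneg (mem_filter.1 hj).2.le (sq_nonneg _))
      ⟨i, hiS, mul_pos (mem_filter.1 hiS).2 (pow_two_pos_of_ne_zero hci)⟩
  exact (hM _ hMv).not_gt (hG.dotProduct_mulVec_sum_eigenvectorBasis S c ▸ hpos)

lemma trace_le_mul_iSup_eigenvalues (hG : G.IsHermitian) {k : ℕ}
    (hk : #{i | 0 < hG.eigenvalues i} ≤ k) (htr : 0 < G.trace) :
    G.trace ≤ k * ⨆ i, hG.eigenvalues i := by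
  set S : Finset n := {i | 0 < hG.eigenvalues i}
  set L := ⨆ i, hG.eigenvalues i
  have hle : ∀ i, hG.eigenvalues i ≤ L := le_ciSup (Set.finite_range _).bddAbove
  have htr_eq : G.trace = ∑ i, hG.eigenvalues i := by simpa using hG.trace_eq_sum_eigenvalues
  have hsum_le : ∑ i, hG.eigenvalues i ≤ ∑ i ∈ S, hG.eigenvalues i := by
    rw [← sum_filter_add_sum_filter_not univ (fun i => 0 < hG.eigenvalues i)]
    exact add_le_of_nonpos_right (sum_nonpos fun i hi => not_lt.1 (mem_filter.1 hi).2)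
  obtain ⟨i, hi⟩ : ∃ i, 0 < hG.eigenvalues i := by
    by_contra! h
    exact htr.not_ge (htr_eq ▸ sum_nonpos fun i _ => h i)
  have hL : 0 ≤ L := hi.le.trans (hle i)
  calc G.trace ≤ ∑ i ∈ S, hG.eigenvalues i := htr_eq ▸ hsum_le
    _ ≤ #S * L := by simpa using sum_le_sum fun i (_ : i ∈ S) => hle i
    _ ≤ k * L := by gcongr

end Matrix.IsHermitian

lemma dotProduct_mulVec_nonpos_of_transpose_mulVec_eq_zero {n m : Type*} [Fintype n] [Fintype m]
    (W : Matrix n m ℝ) (z : n → ℝ) {v : n → ℝ} (hv : Wᵀ *ᵥ v = 0) :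
    v ⬝ᵥ ((W * Wᵀ - vecMulVec z z) *ᵥ v) ≤ 0 := by
  rw [sub_mulVec, ← mulVec_mulVec, hv, mulVec_zero, vecMulVec_mulVec, op_smul_eq_smul,
    dotProduct_sub, dotProduct_zero, dotProduct_smul, dotProduct_comm v z, smul_eq_mul, zero_sub,
    neg_nonpos]
  exact mul_self_nonneg _

lemma sum_sq_add_sq_eq_two {n : ℕ} {A : Matrix (Fin n) (Fin 2) ℝ} (hA : Aᵀ * A = 1) :
    ∑ i, (A i 0 ^ 2 + A i 1 ^ 2) = 2 := by
  have h := congrArg trace hA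
  simpa [trace, mul_apply, sum_add_distrib, sq, Fin.sum_univ_two] using h

theorem trace_eq_four_div {n : ℕ} (hn : n ≠ 0) {A W : Matrix (Fin n) (Fin 2) ℝ} {z : Fin n → ℝ}
    (hA : Aᵀ * A = 1)
    (hW : ∀ i, W i 0 = A i 0 ^ 2 - A i 1 ^ 2 ∧ W i 1 = 2 * A i 0 * A i 1)
    (hz : ∀ i, z i = (A i 0 ^ 2 + A i 1 ^ 2) - 2 / (n : ℝ)) :
    (W * Wᵀ - vecMulVec z z).trace = 4 / n := by
  have hdiag : ∀ i,
      (W * Wᵀ - vecMulVec z z) i i = 4 / n * (A i 0 ^ 2 + A i 1 ^ 2) - 4 / n ^ 2 := by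
    intro i
    simp only [Matrix.sub_apply, mul_apply, transpose_apply, vecMulVec_apply, Fin.sum_univ_two,
      (hW i).1, (hW i).2, hz i]
    ring
  simp only [trace, diag_apply, hdiag, sum_sub_distrib, ← mul_sum, sum_sq_add_sq_eq_two hA,
    sum_const, card_univ, Fintype.card_fin, nsmul_eq_mul]
  field_simp
  ring

theorem stmt_11 (n : ℕ) (hn : 2 < n) (A : Matrix (Fin n) (Fin 2) ℝ) (hA : Aᵀ * A = 1)
    (W : Matrix (Fin n) (Fin 2) ℝ)
    (hW : ∀ i, W i 0 = A i 0 ^ 2 - A i 1 ^ 2 ∧ W i 1 = 2 * A i 0 * A i 1)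
    (z : Fin n → ℝ) (hz : ∀ i, z i = (A i 0 ^ 2 + A i 1 ^ 2) - 2 / (n : ℝ))
    (G : Matrix (Fin n) (Fin n) ℝ) (hG : G = W * Wᵀ - Matrix.vecMulVec z z)
    (hGh : G.IsHermitian) :
    Matrix.trace G = 4 / (n : ℝ) ∧ 2 / (n : ℝ) ≤ ⨆ i, hGh.eigenvalues i := by
  subst hG
  have htr := trace_eq_four_div (by omega) hA hW hz
  refine ⟨htr, ?_⟩
  have hk : #{i | 0 < hGh.eigenvalues i} ≤ 2 := by
    simpa using hGh.card_pos_eigenvalues_le Wᵀ fun v hv =>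
      dotProduct_mulVec_nonpos_of_transpose_mulVec_eq_zero W z hv
  have hbound := hGh.trace_le_mul_iSup_eigenvalues hk (htr ▸ by positivity)
  rw [htr, Nat.cast_ofNat] at hbound
  linarith [show (4 : ℝ) / n = 2 * (2 / n) by ring]
end

section
/- Let n > 2 and let A be an n×2 real matrix with orthonormal columns (AᵀA = I₂), with rows rᵢ = (xᵢ, yᵢ). Set wᵢ = (xᵢ² − yᵢ², 2xᵢyᵢ) and zᵢ = ‖rᵢ‖² − 2/n. Then there exist indices i, j (not necessarily distinct) such that ⟨wᵢ, wⱼ⟩ − zᵢzⱼ + 2/n² ≤ 0. -/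
/-!
Let `mᵢ = ‖rᵢ‖²` and `c = 2/n`, so `zᵢ = mᵢ - c`. Orthonormality of the columns gives `∑ mᵢ = 2`,
`∑ zᵢ = 0` and `∑ wᵢ = 0`, and since `wᵢ` is the complex square of `rᵢ`, the weights
`Pᵢⱼ = mᵢmⱼ - ⟨wᵢ, wⱼ⟩ = 2 det(rᵢ, rⱼ)²` are nonnegative with total mass `4`. If every
`Eᵢⱼ = ⟨wᵢ, wⱼ⟩ - zᵢzⱼ + c²/2` were positive, `∑ Pᵢⱼ Eᵢⱼ` would be positive. But this sum equals
`2c² - ‖G - zzᵀ‖²`, where `G` is the Gram matrix of the `wᵢ`, and because the `wᵢ` live in a plane,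
`‖G - zzᵀ‖² ≥ tr(G - zzᵀ)² / 2 = 2c²` (Cauchy–Schwarz for `y = ∑ zᵢwᵢ` and the Rayleigh quotient
of `∑ wᵢwᵢᵀ` at `y`).
-/

open Matrix
open scoped RealInnerProductSpace

theorem sq_add_sub_le_two_mul_of_sq_le_mul {p q r s y₁ y₂ : ℝ} (hpq : 0 ≤ p + q) (hs : 0 ≤ s)
    (hy : (y₁ ^ 2 + y₂ ^ 2) ^ 2 ≤ s * (p * y₁ ^ 2 + 2 * r * y₁ * y₂ + q * y₂ ^ 2)) :
    (p + q - s) ^ 2 ≤ 2 * (p ^ 2 + q ^ 2 + 2 * r ^ 2 - 2 * (y₁ ^ 2 + y₂ ^ 2) + s ^ 2) := by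
  set t := y₁ ^ 2 + y₂ ^ 2
  set R := p * y₁ ^ 2 + 2 * r * y₁ * y₂ + q * y₂ ^ 2
  -- the Frobenius norm of `!![p, r; r, q]` computed in the orthogonal frame `(y, y⊥)`
  have hframe : t ^ 2 * (p ^ 2 + q ^ 2 + 2 * r ^ 2) = R ^ 2 + ((p + q) * t - R) ^ 2
      + 2 * ((p - q) * y₁ * y₂ + r * (y₂ ^ 2 - y₁ ^ 2)) ^ 2 := by ring
  rcases (by positivity : 0 ≤ t).eq_or_lt with ht | ht
  · nlinarith [sq_nonneg (p - q), sq_nonneg r, mul_nonneg hpq hs]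
  · have hts : t * t ^ 2 ≤ t * (s * R) := mul_le_mul_of_nonneg_left hy ht.le
    refine le_of_mul_le_mul_left ?_ (pow_pos ht 2)
    nlinarith [sq_nonneg (R - t * s - ((p + q) * t - R)),
      sq_nonneg ((p - q) * y₁ * y₂ + r * (y₂ ^ 2 - y₁ ^ 2))]

theorem sq_sum_norm_sq_sub_sq_le {ι : Type*} [Fintype ι] (w : ι → EuclideanSpace ℝ (Fin 2))
    (z : ι → ℝ) :
    (∑ i, (‖w i‖ ^ 2 - z i ^ 2)) ^ 2 ≤ 2 * ∑ i, ∑ j, (⟪w i, w j⟫ - z i * z j) ^ 2 := by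
  set u : ι → ℝ := fun i ↦ w i 0
  set v : ι → ℝ := fun i ↦ w i 1
  have hinner : ∀ i j, ⟪w i, w j⟫ = u i * u j + v i * v j := fun i j ↦ by
    simp [PiLp.inner_apply, Fin.sum_univ_two, u, v]; ring
  set p := ∑ i, u i ^ 2
  set q := ∑ i, v i ^ 2
  set r := ∑ i, u i * v i
  set s := ∑ i, z i ^ 2
  set y₁ := ∑ i, z i * u i
  set y₂ := ∑ i, z i * v i
  have htrace : ∑ i, (‖w i‖ ^ 2 - z i ^ 2) = p + q - s := by
    simp only [← real_inner_self_eq_norm_sq, hinner, p, q, s, ← Finset.sum_add_distrib,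
      ← Finset.sum_sub_distrib]
    ring_nf
  have hfrobenius : ∑ i, ∑ j, (⟪w i, w j⟫ - z i * z j) ^ 2
      = p ^ 2 + q ^ 2 + 2 * r ^ 2 - 2 * (y₁ ^ 2 + y₂ ^ 2) + s ^ 2 := by
    have h : ∀ i j, (⟪w i, w j⟫ - z i * z j) ^ 2 = u i ^ 2 * u j ^ 2 + v i ^ 2 * v j ^ 2
        + 2 * (u i * v i * (u j * v j)) - 2 * (z i * u i * (z j * u j))
        - 2 * (z i * v i * (z j * v j)) + z i ^ 2 * z j ^ 2 := fun i j ↦ by rw [hinner]; ring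
    simp only [h, Finset.sum_add_distrib, Finset.sum_sub_distrib, ← Finset.mul_sum,
      ← Finset.sum_mul]
    ring
  have hcauchy : (y₁ ^ 2 + y₂ ^ 2) ^ 2 ≤ s * (p * y₁ ^ 2 + 2 * r * y₁ * y₂ + q * y₂ ^ 2) := by
    have hy : y₁ ^ 2 + y₂ ^ 2 = ∑ i, z i * (u i * y₁ + v i * y₂) := by
      simp only [mul_add, Finset.sum_add_distrib, ← mul_assoc, ← Finset.sum_mul, y₁, y₂]
      ring
    have hR : p * y₁ ^ 2 + 2 * r * y₁ * y₂ + q * y₂ ^ 2 = ∑ i, (u i * y₁ + v i * y₂) ^ 2 := by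
      have h : ∀ i, (u i * y₁ + v i * y₂) ^ 2
          = u i ^ 2 * y₁ ^ 2 + u i * v i * (2 * y₁ * y₂) + v i ^ 2 * y₂ ^ 2 := fun i ↦ by ring
      simp only [h, Finset.sum_add_distrib, ← Finset.sum_mul, p, q, r]
      ring
    rw [hy, hR]
    exact Finset.sum_mul_sq_le_sq_mul_sq _ _ _
  rw [htrace, hfrobenius]
  exact sq_add_sub_le_two_mul_of_sq_le_mul (by positivity) (by positivity) hcauchy

theorem sum_sum_sub_inner_mul_eq {ι E : Type*} [Fintype ι] [NormedAddCommGroup E]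
    [InnerProductSpace ℝ E] {w : ι → E} {z : ι → ℝ} {c : ℝ} (hw : ∑ i, w i = 0)
    (hz : ∑ i, z i = 0) (hc : Fintype.card ι * c = 2) :
    ∑ i, ∑ j, ((z i + c) * (z j + c) - ⟪w i, w j⟫) * (⟪w i, w j⟫ - z i * z j + c ^ 2 / 2)
      = 2 * c ^ 2 - ∑ i, ∑ j, (⟪w i, w j⟫ - z i * z j) ^ 2 := by
  have hsplit : ∀ i j,
      ((z i + c) * (z j + c) - ⟪w i, w j⟫) * (⟪w i, w j⟫ - z i * z j + c ^ 2 / 2)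
        = ⟪(c * z i + c ^ 2 / 2) • w i, w j⟫ + ⟪w i, (c * z j) • w j⟫
          - c * z i * (z j ^ 2 + c * z j) - c * z i ^ 2 * z j
          + c ^ 2 / 2 * ((z i + c) * (z j + c)) - (⟪w i, w j⟫ - z i * z j) ^ 2 := fun i j ↦ by
    rw [real_inner_smul_left, real_inner_smul_right]; ring
  have hleft : ∑ i, ∑ j, ⟪(c * z i + c ^ 2 / 2) • w i, w j⟫ = 0 := by
    simp [← inner_sum, hw]
  have hright : ∑ i, ∑ j, ⟪w i, (c * z j) • w j⟫ = 0 := by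
    simp [← inner_sum, ← sum_inner, hw]
  have hmass : ∑ i, (z i + c) = 2 := by
    simp [Finset.sum_add_distrib, hz, hc]
  simp only [hsplit, Finset.sum_add_distrib, Finset.sum_sub_distrib, hleft, hright,
    ← Finset.mul_sum, ← Finset.sum_mul, hz, hmass]
  ring

theorem Finset.sum_mul_pos_of_sum_pos {ι R : Type*} [CommSemiring R] [LinearOrder R]
    [IsStrictOrderedRing R] {s : Finset ι} {f g : ι → R} (hf : ∀ i ∈ s, 0 ≤ f i)
    (hg : ∀ i ∈ s, 0 < g i) (hsum : 0 < ∑ i ∈ s, f i) :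
    0 < ∑ i ∈ s, f i * g i := by
  obtain ⟨i, hi, hfi⟩ := Finset.exists_lt_of_sum_lt (f := 0) (g := f) (s := s) (by simpa using hsum)
  exact Finset.sum_pos' (fun j hj ↦ mul_nonneg (hf j hj) (hg j hj).le)
    ⟨i, hi, mul_pos hfi (hg i hi)⟩

theorem exists_inner_sub_mul_add_sq_div_two_nonpos {ι : Type*} [Fintype ι]
    {w : ι → EuclideanSpace ℝ (Fin 2)} {z : ι → ℝ} {c : ℝ} (hw : ∑ i, w i = 0)
    (hz : ∑ i, z i = 0) (hc : Fintype.card ι * c = 2)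
    (hle : ∀ i j, ⟪w i, w j⟫ ≤ (z i + c) * (z j + c)) (hnorm : ∀ i, ‖w i‖ ^ 2 = (z i + c) ^ 2) :
    ∃ i j, ⟪w i, w j⟫ - z i * z j + c ^ 2 / 2 ≤ 0 := by
  by_contra! hpos
  have hmass : ∑ i, ∑ j, ((z i + c) * (z j + c) - ⟪w i, w j⟫) = 4 := by
    have hsum : ∑ i, (z i + c) = 2 := by simp [Finset.sum_add_distrib, hz, hc]
    simp only [Finset.sum_sub_distrib, ← Finset.mul_sum, ← Finset.sum_mul, ← inner_sum, hw,
      inner_zero_right, hsum]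
    norm_num
  have hweighted : 0 < ∑ i, ∑ j,
      ((z i + c) * (z j + c) - ⟪w i, w j⟫) * (⟪w i, w j⟫ - z i * z j + c ^ 2 / 2) := by
    rw [← Fintype.sum_prod_type'] at hmass ⊢
    exact Finset.sum_mul_pos_of_sum_pos (fun x _ ↦ sub_nonneg.2 (hle x.1 x.2))
      (fun x _ ↦ hpos x.1 x.2) (by rw [hmass]; norm_num)
  have htrace : ∑ i, (‖w i‖ ^ 2 - z i ^ 2) = 2 * c := by
    have h : ∀ i, ‖w i‖ ^ 2 - z i ^ 2 = 2 * c * z i + c ^ 2 := fun i ↦ by rw [hnorm]; ring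
    simp only [h, Finset.sum_add_distrib, ← Finset.mul_sum, hz, Finset.sum_const,
      Finset.card_univ, nsmul_eq_mul]
    linear_combination c * hc
  have hbound := sq_sum_norm_sq_sub_sq_le w z
  rw [sum_sum_sub_inner_mul_eq hw hz hc] at hweighted
  rw [htrace] at hbound
  linarith

theorem stmt_14_general (n : ℕ) (A : Matrix (Fin n) (Fin 2) ℝ) (hA : Aᵀ * A = 1)
    (w : Fin n → EuclideanSpace ℝ (Fin 2))
    (hw : ∀ i, w i 0 = A i 0 ^ 2 - A i 1 ^ 2 ∧ w i 1 = 2 * A i 0 * A i 1)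
    (z : Fin n → ℝ) (hz : ∀ i, z i = (A i 0 ^ 2 + A i 1 ^ 2) - 2 / (n : ℝ)) :
    ∃ i j, ⟪w i, w j⟫ - z i * z j + 2 / (n : ℝ) ^ 2 ≤ 0 := by
  have hcol : ∀ k l, ∑ i, A i k * A i l = (1 : Matrix (Fin 2) (Fin 2) ℝ) k l := fun k l ↦ by
    rw [← hA, mul_apply]; rfl
  have h00 : ∑ i, A i 0 ^ 2 = 1 := by simpa [sq] using hcol 0 0
  have h11 : ∑ i, A i 1 ^ 2 = 1 := by simpa [sq] using hcol 1 1
  have h01 : ∑ i, A i 0 * A i 1 = 0 := by simpa using hcol 0 1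
  have hn : (n : ℝ) ≠ 0 := by
    rintro hn
    obtain rfl : n = 0 := by exact_mod_cast hn
    simp at h00
  set c := 2 / (n : ℝ)
  have hc : (n : ℝ) * c = 2 := mul_div_cancel₀ _ hn
  -- `wᵢ = rᵢ²` as complex numbers, and `Re (a² conj b²) = |a|²|b|² - 2 (Im (a conj b))²`
  have hinner : ∀ i j, ⟪w i, w j⟫
      = (z i + c) * (z j + c) - 2 * (A i 0 * A j 1 - A j 0 * A i 1) ^ 2 := fun i j ↦ by
    simp only [PiLp.inner_apply, Fin.sum_univ_two, hw, hz, RCLike.inner_apply, conj_trivial]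
    ring
  have hwsum : ∑ i, w i = 0 := by
    ext k
    fin_cases k <;> simp [hw, Finset.sum_sub_distrib, mul_assoc, ← Finset.mul_sum, h00, h11, h01]
  have hzsum : ∑ i, z i = 0 := by
    simp only [hz, Finset.sum_sub_distrib, Finset.sum_add_distrib, h00, h11, Finset.sum_const,
      Finset.card_univ, Fintype.card_fin, nsmul_eq_mul, hc]
    norm_num
  obtain ⟨i, j, hij⟩ := exists_inner_sub_mul_add_sq_div_two_nonpos hwsum hzsum
    (by rwa [Fintype.card_fin]) (fun i j ↦ by rw [hinner]; exact sub_le_self _ (by positivity))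
    (fun i ↦ by rw [← real_inner_self_eq_norm_sq, hinner]; ring)
  exact ⟨i, j, le_of_eq_of_le (by ring) hij⟩

theorem stmt_14 (n : ℕ) (hn : 2 < n) (A : Matrix (Fin n) (Fin 2) ℝ) (hA : Aᵀ * A = 1)
    (w : Fin n → EuclideanSpace ℝ (Fin 2))
    (hw : ∀ i, w i 0 = A i 0 ^ 2 - A i 1 ^ 2 ∧ w i 1 = 2 * A i 0 * A i 1)
    (z : Fin n → ℝ) (hz : ∀ i, z i = (A i 0 ^ 2 + A i 1 ^ 2) - 2 / (n : ℝ)) :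
    ∃ i j, ⟪w i, w j⟫ - z i * z j + 2 / (n : ℝ) ^ 2 ≤ 0 :=
  stmt_14_general n A hA w hw z hz
end

section
/- For every natural number n ≥ 4, consider the n×2 real matrix A whose first n−2 rows all equal X = (a, 0), whose (n−1)-st row is Y = (b, c), and whose n-th row is Z = (b, −c), where a = √((n−1)/(n(n−2))), b = 1/√(2n), and c = 1/√2. Then every 2×2 submatrix formed by two distinct rows of A has smallest singular value at most 1/√n. -/
open Matrix

/-! If `Q` has rows `u, v`, then `Q Qᵀ` has trace `|u|² + |v|²` and determinant
`(det Q)²`, so `σ₂(Q)² = t` as soon as `t` is the smaller root of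
`λ² - (|u|² + |v|²) λ + (det Q)²`.
Two equal rows give `t = 0`; for the pairs `X, Y`, `X, Z` and `Y, Z` the choice of `a, b, c`
makes `t = 1/n` a root, and `2/n ≤ |u|² + |v|²` makes it the smaller one. -/

lemma sigma2_eq_of_det (Q : Matrix (Fin 2) (Fin 2) ℝ) :
    sigma2 Q = √((trace (Q * Qᵀ) - √(trace (Q * Qᵀ) ^ 2 - 4 * Q.det ^ 2)) / 2) := by
  rw [sigma2, det_mul, det_transpose, ← sq]

lemma trace_mul_transpose_fin_two (p q r s : ℝ) :
    trace (!![p, q; r, s] * !![p, q; r, s]ᵀ) = p ^ 2 + q ^ 2 + r ^ 2 + s ^ 2 := by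
  simp only [trace_fin_two, mul_apply, Fin.sum_univ_two, transpose_apply, of_apply, cons_val',
    cons_val_zero, cons_val_one, empty_val', cons_val_fin_one]
  ring

lemma sigma2_fin_two_eq_sqrt {p q r s t : ℝ} (hT : 2 * t ≤ p ^ 2 + q ^ 2 + r ^ 2 + s ^ 2)
    (hD : (p * s - q * r) ^ 2 = t * (p ^ 2 + q ^ 2 + r ^ 2 + s ^ 2 - t)) :
    sigma2 !![p, q; r, s] = √t := by
  have hdisc : (p ^ 2 + q ^ 2 + r ^ 2 + s ^ 2) ^ 2 - 4 * (p * s - q * r) ^ 2 =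
      (p ^ 2 + q ^ 2 + r ^ 2 + s ^ 2 - 2 * t) ^ 2 := by
    rw [hD]; ring
  rw [sigma2_eq_of_det, trace_mul_transpose_fin_two, det_fin_two_of, hdisc,
    Real.sqrt_sq (by linarith)]
  congr 1; ring

lemma sigma2_fin_two_swap_rows (p q r s : ℝ) : sigma2 !![r, s; p, q] = sigma2 !![p, q; r, s] := by
  simp only [sigma2_eq_of_det, trace_mul_transpose_fin_two, det_fin_two_of]
  ring_nf

lemma sigma2_fin_two_of_rows_eq (p q : ℝ) : sigma2 !![p, q; p, q] = 0 := by
  rw [sigma2_fin_two_eq_sqrt (t := 0) (by rw [mul_zero]; positivity) (by ring), Real.sqrt_zero]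

section Rows

variable {n a b c y : ℝ}

lemma sigma2_rowX_rowY (hn : 3 ≤ n) (ha : a ^ 2 = (n - 1) / (n * (n - 2)))
    (hb : b ^ 2 = 1 / (2 * n)) (hy : y ^ 2 = 1 / 2) : sigma2 !![a, 0; b, y] = 1 / √n := by
  have hn0 : n ≠ 0 := by positivity
  have hn2 : n - 2 ≠ 0 := by linarith
  have hinv : n⁻¹ ≤ 1 / 3 := by rw [one_div]; exact inv_anti₀ (by norm_num) hn
  have hb' : 1 / (2 * n) = n⁻¹ / 2 := by ring
  rw [one_div, ← Real.sqrt_inv]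
  apply sigma2_fin_two_eq_sqrt
  · rw [hb, hy, hb']
    nlinarith [sq_nonneg a]
  · rw [show (a * y - 0 * b) ^ 2 = a ^ 2 * y ^ 2 by ring, ha, hb, hy]
    field_simp
    ring

lemma sigma2_rowY_rowZ (hn : 1 ≤ n) (hb : b ^ 2 = 1 / (2 * n)) (hc : c ^ 2 = 1 / 2) :
    sigma2 !![b, c; b, -c] = 1 / √n := by
  have hn0 : n ≠ 0 := by positivity
  rw [one_div, ← Real.sqrt_inv]
  apply sigma2_fin_two_eq_sqrt
  · have hinv : n⁻¹ ≤ 1 := inv_le_one_of_one_le₀ hn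
    have hb' : 1 / (2 * n) = n⁻¹ / 2 := by ring
    rw [neg_sq, hb, hc, hb']
    linarith
  · rw [neg_sq, show (b * -c - c * b) ^ 2 = 4 * b ^ 2 * c ^ 2 by ring, hb, hc]
    field_simp
    ring

end Rows

theorem stmt_18 (n : ℕ) (hn : 4 ≤ n) (a b c : ℝ)
    (ha : a = Real.sqrt (((n : ℝ) - 1) / ((n : ℝ) * ((n : ℝ) - 2))))
    (hb : b = 1 / Real.sqrt (2 * (n : ℝ))) (hc : c = 1 / Real.sqrt 2)
    (A : Matrix (Fin n) (Fin 2) ℝ)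
    (hA : ∀ i : Fin n,
      (i.1 < n - 2 → A i 0 = a ∧ A i 1 = 0) ∧
      (i.1 = n - 2 → A i 0 = b ∧ A i 1 = c) ∧
      (i.1 = n - 1 → A i 0 = b ∧ A i 1 = -c)) :
    ∀ i j : Fin n, i ≠ j →
      sigma2 !![A i 0, A i 1; A j 0, A j 1] ≤ 1 / Real.sqrt n := by
  intro i j hij
  wlog hlt : i < j generalizing i j
  · rw [sigma2_fin_two_swap_rows]
    exact this j i hij.symm (lt_of_le_of_ne (not_lt.mp hlt) hij.symm)
  have hn4 : (4 : ℝ) ≤ n := by exact_mod_cast hn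
  have ha2 : a ^ 2 = (n - 1) / (n * (n - 2)) := by
    rw [ha, Real.sq_sqrt (div_nonneg (by linarith) (mul_nonneg (by linarith) (by linarith)))]
  have hb2 : b ^ 2 = 1 / (2 * n) := by rw [hb, div_pow, one_pow, Real.sq_sqrt (by positivity)]
  have hc2 : c ^ 2 = 1 / 2 := by rw [hc, div_pow, one_pow, Real.sq_sqrt (by norm_num)]
  have hval : i.1 < j.1 := hlt
  rcases (by omega : j.1 < n - 2 ∨ j.1 = n - 2 ∨ i.1 < n - 2 ∧ j.1 = n - 1 ∨
      i.1 = n - 2 ∧ j.1 = n - 1) with hj | hj | ⟨hi, hj⟩ | ⟨hi, hj⟩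
  · rw [(hA i).1 (by omega) |>.1, (hA i).1 (by omega) |>.2, (hA j).1 hj |>.1, (hA j).1 hj |>.2,
      sigma2_fin_two_of_rows_eq]
    positivity
  · rw [(hA i).1 (by omega) |>.1, (hA i).1 (by omega) |>.2, (hA j).2.1 hj |>.1,
      (hA j).2.1 hj |>.2, sigma2_rowX_rowY (by linarith) ha2 hb2 hc2]
  · rw [(hA i).1 hi |>.1, (hA i).1 hi |>.2, (hA j).2.2 hj |>.1, (hA j).2.2 hj |>.2,
      sigma2_rowX_rowY (by linarith) ha2 hb2 (by rw [neg_sq, hc2])]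
  · rw [(hA i).2.1 hi |>.1, (hA i).2.1 hi |>.2, (hA j).2.2 hj |>.1, (hA j).2.2 hj |>.2,
      sigma2_rowY_rowZ (by linarith) hb2 hc2]
end
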